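/- arXiv:2404.17441 — 5 statements merged into one kernel-verified Lean document; each statement's English description precedes it below -/
import Mathlib

section
/- If φ : ℝ → ℝ is convex and α_1,...,α_d ≥ 0, then the function f(x_1,...,x_d) = φ(∑_{n=1}^d α_n x_n) is supermodular. -/
/-!
Writing `f x = φ (g x)` with `g x = ∑ αₙ xₙ`, the map `g` is monotone and modular:
`g (x ⊓ y) + g (x ⊔ y) = g x + g y`. So `g x` and `g y` lie between `g (x ⊓ y)` and `g (x ⊔ y)`
and have the same sum, and for a convex `φ` moving two points apart with fixed sum can only
increase `φ a + φ b`.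
-/

open Set

section Convexity

variable {𝕜 E β : Type*} [Semiring 𝕜] [PartialOrder 𝕜] [AddCommMonoid E]
  [AddCommMonoid β] [PartialOrder β] [IsOrderedAddMonoid β] [Module 𝕜 E] [SMul 𝕜 β]
  {s : Set E} {f : E → β}

theorem ConvexOn.map_add_map_swap_le (hf : ConvexOn 𝕜 s f) {x y : E} (hx : x ∈ s) (hy : y ∈ s)
    {a b : 𝕜} (ha : 0 ≤ a) (hb : 0 ≤ b) (hab : a + b = 1) :
    f (a • x + b • y) + f (b • x + a • y) ≤ (a • f x + b • f y) + (b • f x + a • f y) :=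
  add_le_add (hf.2 hx hy ha hb hab) (hf.2 hx hy hb ha (by rw [add_comm, hab]))

end Convexity

section OrderedField

variable {𝕜 : Type*} [Field 𝕜] [LinearOrder 𝕜] [IsStrictOrderedRing 𝕜] {s : Set 𝕜} {φ : 𝕜 → 𝕜}

theorem ConvexOn.map_add_map_le_of_add_eq (hφ : ConvexOn 𝕜 s φ) {m M a b : 𝕜}
    (hm : m ∈ s) (hM : M ∈ s) (hma : m ≤ a) (haM : a ≤ M) (hab : a + b = m + M) :
    φ a + φ b ≤ φ m + φ M := by
  obtain ⟨t, u, ht, hu, htu, rfl⟩ : a ∈ segment 𝕜 m M := by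
    rw [segment_eq_Icc (hma.trans haM)]
    exact ⟨hma, haM⟩
  have hb : b = u • m + t • M := by
    simp only [smul_eq_mul] at hab ⊢
    linear_combination hab - (m + M) * htu
  calc φ (t • m + u • M) + φ b ≤ (t • φ m + u • φ M) + (u • φ m + t • φ M) :=
        hb ▸ hφ.map_add_map_swap_le hm hM ht hu htu
    _ = φ m + φ M := by
        simp only [smul_eq_mul]
        linear_combination (φ m + φ M) * htu

theorem ConvexOn.map_add_map_le_of_monotone_modular {P : Type*} [Lattice P] {g : P → 𝕜}
    (hφ : ConvexOn 𝕜 s φ) (hgs : ∀ x, g x ∈ s) (hg : Monotone g)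
    (hmod : ∀ x y, g (x ⊓ y) + g (x ⊔ y) = g x + g y) (x y : P) :
    φ (g x) + φ (g y) ≤ φ (g (x ⊓ y)) + φ (g (x ⊔ y)) :=
  hφ.map_add_map_le_of_add_eq (hgs _) (hgs _) (hg inf_le_left) (hg le_sup_left) (hmod x y).symm

end OrderedField

section WeightedSum

variable {ι R : Type*} [Fintype ι]

theorem sum_mul_inf_add_sum_mul_sup [CommRing R] [LinearOrder R] (α x y : ι → R) :
    ∑ i, α i * (x ⊓ y) i + ∑ i, α i * (x ⊔ y) i = ∑ i, α i * x i + ∑ i, α i * y i := by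
  simp only [← Finset.sum_add_distrib, ← mul_add, Pi.inf_apply, Pi.sup_apply, min_add_max]

theorem monotone_sum_mul_of_nonneg [Semiring R] [PartialOrder R] [IsOrderedRing R] {α : ι → R}
    (hα : ∀ i, 0 ≤ α i) : Monotone fun x : ι → R ↦ ∑ i, α i * x i :=
  fun _ _ hxy ↦ Finset.sum_le_sum fun i _ ↦ mul_le_mul_of_nonneg_left (hxy i) (hα i)

end WeightedSum

/-- If `φ : ℝ → ℝ` is convex and `α_n ≥ 0`, then
`f(x) = φ(∑ α_n x_n)` is supermodular on `ℝ^d`. -/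
theorem stmt_4 (d : ℕ) (φ : ℝ → ℝ) (hφ : ConvexOn ℝ Set.univ φ)
    (α : Fin d → ℝ) (hα : ∀ n, 0 ≤ α n) :
    ∀ x y : Fin d → ℝ,
      φ (∑ n, α n * x n) + φ (∑ n, α n * y n) ≤
        φ (∑ n, α n * (x ⊓ y) n) + φ (∑ n, α n * (x ⊔ y) n) :=
  hφ.map_add_map_le_of_monotone_modular (fun _ ↦ mem_univ _) (monotone_sum_mul_of_nonneg hα)
    (sum_mul_inf_add_sum_mul_sup α)
end

section
/- If φ : ℝ → ℝ is convex and g_1,...,g_d : ℝ → ℝ are increasing, then the function f(x_1,...,x_d) = φ(∑_{n=1}^d g_n(x_n)) is supermodular. -/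
lemma convex_aux (φ : ℝ → ℝ) (hφ : ConvexOn ℝ Set.univ φ) {a b c e : ℝ}
    (hca : c ≤ a) (had : a ≤ e) (hcb : c ≤ b)
    (hsum : a + b = c + e) : φ a + φ b ≤ φ c + φ e := by
  rcases eq_or_lt_of_le (hca.trans had) with h | h
  · have ha : a = c := le_antisymm (h ▸ had) hca
    have hb : b = e := by linarith
    rw [ha, hb]
  · set t : ℝ := (e - a) / (e - c) with ht
    have hec : (0:ℝ) < e - c := by linarith
    have ht0 : 0 ≤ t := div_nonneg (by linarith) hec.le
    have ht1 : t ≤ 1 := (div_le_one hec).2 (by linarith)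
    have hts : t * (e - c) = e - a := div_mul_cancel₀ _ hec.ne'
    have h1 : φ (t * c + (1 - t) * e) ≤ t * φ c + (1 - t) * φ e := by
      have := hφ.2 (Set.mem_univ c) (Set.mem_univ e) ht0 (sub_nonneg.2 ht1)
        (add_sub_cancel t 1)
      simpa using this
    have h2 : φ ((1 - t) * c + t * e) ≤ (1 - t) * φ c + t * φ e := by
      have := hφ.2 (Set.mem_univ c) (Set.mem_univ e) (sub_nonneg.2 ht1) ht0
        (sub_add_cancel 1 t)
      simpa using this
    have ea : t * c + (1 - t) * e = a := by nlinarith [hts]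
    have eb : (1 - t) * c + t * e = b := by nlinarith [hts]
    rw [ea] at h1; rw [eb] at h2
    linarith

/-- If `φ : ℝ → ℝ` is convex and each `g_n : ℝ → ℝ` is increasing, then
`f(x) = φ(∑ g_n(x_n))` is supermodular on `ℝ^d`. -/
theorem stmt_5 (d : ℕ) (φ : ℝ → ℝ) (hφ : ConvexOn ℝ Set.univ φ)
    (g : Fin d → ℝ → ℝ) (hg : ∀ n, Monotone (g n)) :
    ∀ x y : Fin d → ℝ,
      φ (∑ n, g n (x n)) + φ (∑ n, g n (y n)) ≤
        φ (∑ n, g n ((x ⊓ y) n)) + φ (∑ n, g n ((x ⊔ y) n)) := by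
  intro x y
  apply convex_aux φ hφ
  · exact Finset.sum_le_sum fun n _ => hg n (inf_le_left (b := y n))
  · exact Finset.sum_le_sum fun n _ => hg n (le_sup_left (b := y n))
  · exact Finset.sum_le_sum fun n _ => hg n (inf_le_right (a := x n))
  · rw [← Finset.sum_add_distrib, ← Finset.sum_add_distrib]
    refine Finset.sum_congr rfl fun n _ => ?_
    simp only [Pi.inf_apply, Pi.sup_apply]
    rcases le_total (x n) (y n) with h | h
    · rw [inf_eq_left.2 h, sup_eq_right.2 h]
    · rw [inf_eq_right.2 h, sup_eq_left.2 h]; ring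
end

section
/- For any bivariate random vector (X_1, X_2) with X_1 and X_2 real-valued and integrable, and a comonotonic coupling (X_1^c, X_2^c) = (F_{X_1}^{-1}(U), F_{X_2}^{-1}(U)) with U uniform on (0,1), one has max{X_1, X_2} ≥_{st} max{X_1^c, X_2^c}, i.e., P(max{X_1,X_2} > t) ≥ P(max{X_1^c, X_2^c} > t) for all t ∈ ℝ. -/
open MeasureTheory ProbabilityTheory Filter Topology Set

/-! The event `t < max (F₁⁻¹(U), F₂⁻¹(U))` forces `U > min (F₁ t, F₂ t)`, which has
probability `1 - min (F₁ t, F₂ t) = max (P(X₁ > t), P(X₂ > t)) ≤ P(max (X₁, X₂) > t)`. -/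

lemma sInf_le_of_le_of_tendsto_atBot {F : ℝ → ℝ} (hF : Monotone F)
    (hF₀ : Tendsto F atBot (𝓝 0)) {u t : ℝ} (hu : 0 < u) (ht : u ≤ F t) :
    sInf {x | u ≤ F x} ≤ t := by
  obtain ⟨x₀, hx₀⟩ := (hF₀.eventually (eventually_lt_nhds hu)).exists
  refine csInf_le ⟨x₀, fun x hx => ?_⟩ ht
  by_contra! hx₀x
  exact (hx.trans (hF hx₀x.le)).not_gt hx₀

lemma cdf_lt_of_lt_sInf (μ : Measure ℝ) {u t : ℝ} (hu : 0 < u)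
    (ht : t < sInf {x | u ≤ cdf μ x}) : cdf μ t < u := by
  by_contra! htu
  exact ht.not_ge (sInf_le_of_le_of_tendsto_atBot (monotone_cdf μ) (tendsto_cdf_atBot μ) hu htu)

lemma toReal_measure_le_eq_cdf_map {Ω : Type*} [MeasurableSpace Ω] (P : Measure Ω)
    [IsProbabilityMeasure P] {X : Ω → ℝ} (hX : Measurable X) (x : ℝ) :
    (P {ω | X ω ≤ x}).toReal = cdf (P.map X) x := by
  have := Measure.isProbabilityMeasure_map (μ := P) hX.aemeasurable
  rw [cdf_eq_real, measureReal_def, Measure.map_apply hX measurableSet_Iic]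
  rfl

lemma ofReal_one_sub_toReal_measure_le_eq_measure_lt {Ω : Type*} [MeasurableSpace Ω]
    (P : Measure Ω) [IsProbabilityMeasure P] {X : Ω → ℝ} (hX : Measurable X) (t : ℝ) :
    ENNReal.ofReal (1 - (P {ω | X ω ≤ t}).toReal) = P {ω | t < X ω} := by
  have hcompl : {ω | t < X ω} = {ω | X ω ≤ t}ᶜ := by
    ext ω
    simp
  rw [hcompl, prob_compl_eq_one_sub (measurableSet_le hX measurable_const),
    ENNReal.ofReal_sub _ ENNReal.toReal_nonneg, ENNReal.ofReal_one,
    ENNReal.ofReal_toReal (measure_ne_top P _)]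

lemma measure_preimage_le_of_uniform {Ω' : Type*} [MeasurableSpace Ω'] {P' : Measure Ω'}
    {U : Ω' → ℝ} (hmU : AEMeasurable U P') (hU : P'.map U = volume.restrict (Ioo (0 : ℝ) 1))
    {S : Set ℝ} {m : ℝ} (hS : S ∩ Ioo 0 1 ⊆ Ioi m) :
    P' (U ⁻¹' S) ≤ ENNReal.ofReal (1 - m) :=
  calc P' (U ⁻¹' S) ≤ P'.map U S := Measure.le_map_apply hmU S
    _ = volume (S ∩ Ioo 0 1) := by rw [hU, Measure.restrict_apply' measurableSet_Ioo]
    _ ≤ volume (Ioo m 1) := measure_mono fun x hx => ⟨hS hx, hx.2.2⟩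
    _ = ENNReal.ofReal (1 - m) := Real.volume_Ioo

theorem stmt_8_general
    {Ω : Type*} [MeasurableSpace Ω] (P : Measure Ω) [IsProbabilityMeasure P]
    {Ω' : Type*} [MeasurableSpace Ω'] (P' : Measure Ω') [IsProbabilityMeasure P']
    (X₁ X₂ : Ω → ℝ) (hm₁ : Measurable X₁) (hm₂ : Measurable X₂)
    (U : Ω' → ℝ) (hmU : Measurable U)
    (hU : Measure.map U P' = volume.restrict (Set.Ioo (0:ℝ) 1))
    (q : (Ω → ℝ) → ℝ → ℝ)
    (hq : ∀ (X : Ω → ℝ) (u : ℝ), q X u = sInf {x : ℝ | u ≤ (P {ω | X ω ≤ x}).toReal}) :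
    ∀ t : ℝ,
      P' {ω' | t < max (q X₁ (U ω')) (q X₂ (U ω'))} ≤ P {ω | t < max (X₁ ω) (X₂ ω)} := by
  intro t
  have hcdf_lt : ∀ X, Measurable X → ∀ u : ℝ, 0 < u → t < q X u →
      (P {ω | X ω ≤ t}).toReal < u := by
    intro X hX u hu htq
    simp only [hq, toReal_measure_le_eq_cdf_map P hX] at htq ⊢
    exact cdf_lt_of_lt_sInf _ hu htq
  set F₁ := (P {ω | X₁ ω ≤ t}).toReal
  set F₂ := (P {ω | X₂ ω ≤ t}).toReal
  calc P' {ω' | t < max (q X₁ (U ω')) (q X₂ (U ω'))}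
      = P' (U ⁻¹' {u | t < max (q X₁ u) (q X₂ u)}) := rfl
    _ ≤ ENNReal.ofReal (1 - min F₁ F₂) := by
      refine measure_preimage_le_of_uniform hmU.aemeasurable hU fun u ⟨htu, hu⟩ => ?_
      rw [mem_ofPred_eq, lt_max_iff] at htu
      rcases htu with h | h
      · exact (min_le_left _ _).trans_lt (hcdf_lt X₁ hm₁ u hu.1 h)
      · exact (min_le_right _ _).trans_lt (hcdf_lt X₂ hm₂ u hu.1 h)
    _ ≤ P {ω | t < max (X₁ ω) (X₂ ω)} := by
      rcases min_choice F₁ F₂ with h | h <;> rw [h]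
      · rw [ofReal_one_sub_toReal_measure_le_eq_measure_lt P hm₁]
        exact measure_mono fun ω (hω : t < X₁ ω) => lt_max_of_lt_left hω
      · rw [ofReal_one_sub_toReal_measure_le_eq_measure_lt P hm₂]
        exact measure_mono fun ω (hω : t < X₂ ω) => lt_max_of_lt_right hω

/-- For any integrable bivariate random vector `(X₁, X₂)` and its comonotonic coupling
`(X₁ᶜ, X₂ᶜ) = (F_{X₁}⁻¹(U), F_{X₂}⁻¹(U))` with `U` uniform on `(0,1)`, one has
`max{X₁, X₂} ≥_st max{X₁ᶜ, X₂ᶜ}`, i.e.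
`P(max{X₁ᶜ, X₂ᶜ} > t) ≤ P(max{X₁, X₂} > t)` for all `t ∈ ℝ`. -/
theorem stmt_8
    {Ω : Type*} [MeasurableSpace Ω] (P : Measure Ω) [IsProbabilityMeasure P]
    {Ω' : Type*} [MeasurableSpace Ω'] (P' : Measure Ω') [IsProbabilityMeasure P']
    (X₁ X₂ : Ω → ℝ) (hm₁ : Measurable X₁) (hm₂ : Measurable X₂)
    (hi₁ : Integrable X₁ P) (hi₂ : Integrable X₂ P)
    (U : Ω' → ℝ) (hmU : Measurable U)
    (hU : Measure.map U P' = volume.restrict (Set.Ioo (0:ℝ) 1))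
    (q : (Ω → ℝ) → ℝ → ℝ)
    (hq : ∀ (X : Ω → ℝ) (u : ℝ), q X u = sInf {x : ℝ | u ≤ (P {ω | X ω ≤ x}).toReal}) :
    ∀ t : ℝ,
      P' {ω' | t < max (q X₁ (U ω')) (q X₂ (U ω'))} ≤ P {ω | t < max (X₁ ω) (X₂ ω)} :=
  stmt_8_general P P' X₁ X₂ hm₁ hm₂ U hmU hU q hq
end

section
/- Consider the Markov chain (X_0, X_1, X_2) on {0,1,2} with uniform marginals and bivariate mass matrices a^1 = (1/30)[[8,2,0],[2,5,3],[0,3,7]] for (X_0, X_1) and a^2 = (1/30)[[4,4,2],[4,3,3],[2,3,5]] for (X_1, X_2). Then the conditional probability P(X_1 ≥ 1 | X_0 = 0, X_2 = k) equals 1 − 16/20 for k = 0, 1 − 16/19 for k = 1, and 1 − 16/22 for k = 2, and hence is not increasing in k; in particular (X_0, X_1, X_2) is not conditionally increasing even though each bivariate margin (X_0, X_1) and (X_1, X_2) is conditionally increasing. -/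
noncomputable def a1 : Matrix (Fin 3) (Fin 3) ℝ := (1/30 : ℝ) • !![8,2,0;2,5,3;0,3,7]
noncomputable def a2 : Matrix (Fin 3) (Fin 3) ℝ := (1/30 : ℝ) • !![4,4,2;4,3,3;2,3,5]

/-- The conditional probability `P(X₁ ≥ 1 | X₀ = 0, X₂ = k)` for the Markov chain with
joint mass `P(X₀ = i, X₁ = j, X₂ = k) = 3 a¹_{ij} a²_{jk}`. -/
noncomputable def condProb (k : Fin 3) : ℝ :=
  (∑ j : Fin 3, if 1 ≤ (j : ℕ) then a1 0 j * a2 j k else 0) /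
    ∑ j : Fin 3, a1 0 j * a2 j k

lemma cp0 : condProb 0 = 1 - 16/20 := by
  simp [condProb, a1, a2, Fin.sum_univ_three]
  norm_num

lemma cp1 : condProb 1 = 1 - 16/19 := by
  simp [condProb, a1, a2, Fin.sum_univ_three]
  norm_num

lemma cp2 : condProb 2 = 1 - 16/22 := by
  simp [condProb, a1, a2, Fin.sum_univ_three]
  norm_num

/-- The conditional probabilities `P(X₁ ≥ 1 | X₀ = 0, X₂ = k)` equal `1 − 16/20`,
`1 − 16/19`, `1 − 16/22` for `k = 0, 1, 2`, and hence are not increasing in `k`. -/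
theorem stmt_17 :
    condProb 0 = 1 - 16/20 ∧ condProb 1 = 1 - 16/19 ∧ condProb 2 = 1 - 16/22 ∧
    ¬ Monotone condProb := by
  refine ⟨cp0, cp1, cp2, fun h => ?_⟩
  have := h (show (0 : Fin 3) ≤ 1 by decide)
  rw [cp0, cp1] at this
  norm_num at this
end

section
/- If a random vector X = (X_0, ..., X_n) is a Markov chain (i.e., X_{k+1} is conditionally independent of (X_0,...,X_{k−1}) given X_k) with finite state space in ℝ, and X_{i+1} is stochastically increasing in X_i for all i = 0,...,n−1, then X is conditionally increasing in sequence: for each i, the conditional distribution of X_i given (X_0 = x_0, ..., X_{i−1} = x_{i−1}) is stochastically increasing in (x_0, ..., x_{i−1}). -/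
open MeasureTheory

private lemma decomp {Ω : Type*} [MeasurableSpace Ω] (P : Measure Ω)
    (Y : Ω → ℝ) (hY : Measurable Y) (hf : (Set.range Y).Finite)
    (B : Set Ω) (hB : MeasurableSet B) (z : ℝ) :
    P ({ω | z < Y ω} ∩ B)
      = ∑ w ∈ hf.toFinset.filter (fun w => z < w), P ({ω | Y ω = w} ∩ B) := by
  rw [← measure_biUnion_finset]
  · congr 1
    ext ω
    simp only [Set.mem_iUnion, Set.mem_inter_iff, Set.mem_setOf_eq, Finset.mem_filter,
      Set.Finite.mem_toFinset, Set.mem_range]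
    constructor
    · rintro ⟨hz, hb⟩
      exact ⟨Y ω, ⟨⟨ω, rfl⟩, hz⟩, rfl, hb⟩
    · rintro ⟨w, ⟨_, hz⟩, rfl, hb⟩
      exact ⟨hz, hb⟩
  · intro a _ b _ hab
    simp only [Function.onFun, Set.disjoint_left, Set.mem_inter_iff, Set.mem_setOf_eq]
    rintro ω ⟨rfl, -⟩ ⟨h, -⟩
    exact hab h
  · intro w _
    exact (hY (measurableSet_singleton w)).inter hB

private lemma key {Ω : Type*} [MeasurableSpace Ω] (P : Measure Ω)
    (m : ℕ) (X : ℕ → Ω → ℝ) (hmeas : ∀ i, Measurable (X i))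
    (hfin : ∀ i, (Set.range (X i)).Finite) (x : ℕ → ℝ)
    (hMk : ∀ (z : ℝ),
      P ({ω | X (m+1) ω = z} ∩ {ω | ∀ k ≤ m, X k ω = x k}) / P {ω | ∀ k ≤ m, X k ω = x k}
        = P ({ω | X (m+1) ω = z} ∩ {ω | X m ω = x m}) / P {ω | X m ω = x m}) (z : ℝ) :
    P ({ω | z < X (m+1) ω} ∩ {ω | ∀ k ≤ m, X k ω = x k}) / P {ω | ∀ k ≤ m, X k ω = x k}
      = P ({ω | z < X (m+1) ω} ∩ {ω | X m ω = x m}) / P {ω | X m ω = x m} := by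
  have hBmeas : MeasurableSet {ω | ∀ k ≤ m, X k ω = x k} := by
    have : {ω | ∀ k ≤ m, X k ω = x k} = ⋂ k ∈ Finset.range (m+1), (X k) ⁻¹' {x k} := by
      ext ω; simp [Nat.lt_succ_iff]
    rw [this]
    exact Finset.measurableSet_biInter _ fun k _ => (hmeas k) (measurableSet_singleton _)
  have hB'meas : MeasurableSet {ω | X m ω = x m} :=
    (hmeas m) (measurableSet_singleton (x m))
  rw [decomp P (X (m+1)) (hmeas (m+1)) (hfin (m+1)) _ hBmeas z,
      decomp P (X (m+1)) (hmeas (m+1)) (hfin (m+1)) _ hB'meas z]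
  simp only [div_eq_mul_inv, Finset.sum_mul]
  exact Finset.sum_congr rfl fun w _ => by
    have := hMk w; simpa [div_eq_mul_inv] using this

/-- A Markov chain `X₀, …, Xₙ` with finite state space in `ℝ`, in which `X_{i+1}` is
stochastically increasing in `X_i` for each `i`, is conditionally increasing in sequence:
the conditional distribution of `X_i` given `(X₀ = x₀, …, X_{i−1} = x_{i−1})` is
stochastically increasing in `(x₀, …, x_{i−1})`.  Conditional probabilities are taken as
elementary ratios `P(A ∩ B) / P(B)` (in `ℝ≥0∞`). -/
theorem stmt_18 {Ω : Type*} [MeasurableSpace Ω] (P : Measure Ω) [IsProbabilityMeasure P]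
    (n : ℕ) (X : ℕ → Ω → ℝ)
    (hmeas : ∀ i, Measurable (X i))
    (hfin : ∀ i, (Set.range (X i)).Finite)
    (hMarkov : ∀ i, i + 1 ≤ n → ∀ (x : ℕ → ℝ) (z : ℝ),
      P {ω | ∀ k ≤ i, X k ω = x k} ≠ 0 →
      P ({ω | X (i+1) ω = z} ∩ {ω | ∀ k ≤ i, X k ω = x k}) / P {ω | ∀ k ≤ i, X k ω = x k}
        = P ({ω | X (i+1) ω = z} ∩ {ω | X i ω = x i}) / P {ω | X i ω = x i})
    (hSI : ∀ i, i + 1 ≤ n → ∀ y y' : ℝ, y ≤ y' →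
      P {ω | X i ω = y} ≠ 0 → P {ω | X i ω = y'} ≠ 0 →
      ∀ z : ℝ,
        P ({ω | z < X (i+1) ω} ∩ {ω | X i ω = y}) / P {ω | X i ω = y}
          ≤ P ({ω | z < X (i+1) ω} ∩ {ω | X i ω = y'}) / P {ω | X i ω = y'}) :
    ∀ i, i ≤ n → ∀ (x x' : ℕ → ℝ), (∀ k < i, x k ≤ x' k) →
      P {ω | ∀ k < i, X k ω = x k} ≠ 0 → P {ω | ∀ k < i, X k ω = x' k} ≠ 0 →
      ∀ z : ℝ,
        P ({ω | z < X i ω} ∩ {ω | ∀ k < i, X k ω = x k}) / P {ω | ∀ k < i, X k ω = x k}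
          ≤ P ({ω | z < X i ω} ∩ {ω | ∀ k < i, X k ω = x' k}) /
              P {ω | ∀ k < i, X k ω = x' k} := by
  rintro (_ | m) hi x x' hle hx hx' z
  · simp
  · have hset : ∀ y : ℕ → ℝ,
        {ω | ∀ k < m + 1, X k ω = y k} = {ω | ∀ k ≤ m, X k ω = y k} := by
      intro y; ext ω; simp [Nat.lt_succ_iff]
    rw [hset x, hset x'] at *
    have hsub : ∀ y : ℕ → ℝ, {ω | ∀ k ≤ m, X k ω = y k} ⊆ {ω | X m ω = y m} :=
      fun y ω h => h m le_rfl
    have hxm : P {ω | X m ω = x m} ≠ 0 := fun h0 => hx (measure_mono_null (hsub x) h0)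
    have hx'm : P {ω | X m ω = x' m} ≠ 0 := fun h0 => hx' (measure_mono_null (hsub x') h0)
    rw [key P m X hmeas hfin x (fun w => hMarkov m hi x w hx) z,
        key P m X hmeas hfin x' (fun w => hMarkov m hi x' w hx') z]
    exact hSI m hi (x m) (x' m) (hle m (Nat.lt_succ_self m)) hxm hx'm z
end
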